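/- Let ρ(x,y) = 1+x²+y² and let ρ₁ be a weight function on R = [0,1]×[0,∞) with ρ₁ ≥ 1 and ρ(x,y)/ρ₁(x,y) → 0 as x²+y² → ∞ (uniformly). Then for every f ∈ C_ρ(R), ‖L_{m,n}(f) − f‖_{ρ₁} = sup_{(x,y)∈R} |L_{m,n}(f;x,y) − f(x,y)|/ρ₁(x,y) → 0 as m,n → ∞. -/

import Mathlib

/-- The bivariate Stancu–Szász type operator of the paper:
`L α₁ β₁ α₂ β₂ m n f x y = ∑_{k≥0} ∑_{ν=0}^m C(m,ν) x^ν (1-x)^{m-ν} e^{-ny}(ny)^k/k! ·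
  f((ν+α₁)/(m+β₁), (k+α₂)/(n+β₂))`. -/
noncomputable def L (α₁ β₁ α₂ β₂ : ℝ) (m n : ℕ) (f : ℝ → ℝ → ℝ) (x y : ℝ) : ℝ :=
  ∑' k : ℕ, ∑ ν ∈ Finset.range (m + 1),
    ((m.choose ν : ℝ) * x ^ ν * (1 - x) ^ (m - ν)) *
      (Real.exp (-(n * y)) * (n * y) ^ k / (Nat.factorial k : ℝ)) *
      f ((ν + α₁) / (m + β₁)) ((k + α₂) / (n + β₂))

/-!
`L f (x, y)` averages `f` over the nodes `((ν + α₁)/(m + β₁), (k + α₂)/(n + β₂))` with the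
product of the Bernstein weights in `ν` and the Poisson weights in `k`, and the second moment of
these nodes about `(x, y)` is at most `C (1/m + 1/n) ρ(x, y)`, `ρ(x, y) = 1 + x² + y²`. Hence a
bound `|f(u, v) - f(x, y)| ≤ a + A |(u, v) - (x, y)|²` gives
`|L f (x, y) - f(x, y)| ≤ a + A C (1/m + 1/n) ρ(x, y)`.
The growth of `f` gives such a bound with `a = 3 M ρ(x, y)`, so `|L f - f| ≤ K ρ`, which is small
against `ρ₁` far out. Uniform continuity on `[0,1] × [0, S + 1]` gives one with `a = ε` for
`y ≤ S`, so `L f → f` uniformly on `[0,1] × [0, S]`.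
-/

open Real Set
open scoped Nat

noncomputable def bernsteinWeight (m ν : ℕ) (x : ℝ) : ℝ :=
  m.choose ν * x ^ ν * (1 - x) ^ (m - ν)

noncomputable def poissonWeight (t : ℝ) (k : ℕ) : ℝ :=
  exp (-t) * t ^ k / k !

section Bernstein

variable {m : ℕ} {x : ℝ}

lemma bernsteinWeight_nonneg (hx : x ∈ Icc (0 : ℝ) 1) (ν : ℕ) : 0 ≤ bernsteinWeight m ν x :=
  mul_nonneg (mul_nonneg (Nat.cast_nonneg _) (pow_nonneg hx.1 _))
    (pow_nonneg (by linarith [hx.2]) _)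

lemma bernsteinWeight_eq_zero_of_lt {ν : ℕ} (h : m < ν) : bernsteinWeight m ν x = 0 := by
  simp [bernsteinWeight, Nat.choose_eq_zero_of_lt h]

variable (m x)

lemma bernsteinWeight_eq_eval (ν : ℕ) :
    bernsteinWeight m ν x = (bernsteinPolynomial ℝ m ν).eval x := by
  simp [bernsteinWeight, bernsteinPolynomial]

lemma hasSum_bernsteinWeight_mul (g : ℕ → ℝ) :
    HasSum (fun ν ↦ bernsteinWeight m ν x * g ν)
      (∑ ν ∈ Finset.range (m + 1), bernsteinWeight m ν x * g ν) :=
  hasSum_sum_of_ne_finset_zero fun ν hν ↦ by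
    rw [bernsteinWeight_eq_zero_of_lt (by simpa using hν), zero_mul]

lemma hasSum_bernsteinWeight : HasSum (fun ν ↦ bernsteinWeight m ν x) 1 := by
  have h := congrArg (Polynomial.eval x) (bernsteinPolynomial.sum ℝ m)
  simp only [Polynomial.eval_finsetSum, ← bernsteinWeight_eq_eval, Polynomial.eval_one] at h
  simpa [h] using hasSum_bernsteinWeight_mul m x fun _ ↦ 1

lemma hasSum_bernsteinWeight_mul_self :
    HasSum (fun ν ↦ bernsteinWeight m ν x * ν) (m * x) := by
  have h := congrArg (Polynomial.eval x) (bernsteinPolynomial.sum_smul ℝ m)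
  simp only [Polynomial.eval_finsetSum, nsmul_eq_mul, Polynomial.eval_mul,
    Polynomial.eval_natCast, Polynomial.eval_X, ← bernsteinWeight_eq_eval] at h
  convert hasSum_bernsteinWeight_mul m x fun ν ↦ (ν : ℝ) using 1
  rw [← h]
  exact Finset.sum_congr rfl fun ν _ ↦ mul_comm _ _

lemma hasSum_bernsteinWeight_mul_sq_sub :
    HasSum (fun ν ↦ bernsteinWeight m ν x * (ν - m * x) ^ 2) (m * x * (1 - x)) := by
  have h := congrArg (Polynomial.eval x) (bernsteinPolynomial.variance ℝ m)
  simp only [Polynomial.eval_finsetSum, Polynomial.eval_mul, Polynomial.eval_pow,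
    Polynomial.eval_sub, Polynomial.eval_natCast, Polynomial.eval_X,
    Polynomial.eval_one, ← bernsteinWeight_eq_eval, nsmul_eq_mul] at h
  convert hasSum_bernsteinWeight_mul m x fun ν ↦ ((ν : ℝ) - m * x) ^ 2 using 1
  rw [← h]
  exact Finset.sum_congr rfl fun ν _ ↦ by ring

end Bernstein

lemma poissonWeight_nonneg {t : ℝ} (ht : 0 ≤ t) (k : ℕ) : 0 ≤ poissonWeight t k := by
  unfold poissonWeight
  positivity

lemma poissonWeight_succ_mul (t : ℝ) (k : ℕ) :
    poissonWeight t (k + 1) * (k + 1 : ℕ) = t * poissonWeight t k := by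
  unfold poissonWeight
  rw [Nat.factorial_succ]
  push_cast
  field_simp
  ring

lemma hasSum_poissonWeight (t : ℝ) : HasSum (poissonWeight t) 1 := by
  have h := (NormedSpace.expSeries_div_hasSum_exp t).mul_left (exp (-t))
  rw [← Real.exp_eq_exp_ℝ, ← Real.exp_add, neg_add_cancel, Real.exp_zero] at h
  exact h.congr_fun fun k ↦ mul_div_assoc _ _ _

lemma hasSum_poissonWeight_mul_self (t : ℝ) : HasSum (fun k ↦ poissonWeight t k * k) t := by
  rw [← hasSum_nat_add_iff' 1]
  simp only [Finset.range_one, Finset.sum_singleton, CharP.cast_eq_zero, mul_zero, sub_zero]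
  have h := ((hasSum_poissonWeight t).mul_left t).congr_fun fun k ↦ poissonWeight_succ_mul t k
  rwa [mul_one] at h

lemma hasSum_poissonWeight_mul_sq (t : ℝ) :
    HasSum (fun k ↦ poissonWeight t k * k ^ 2) (t ^ 2 + t) := by
  rw [← hasSum_nat_add_iff' 1]
  simp only [Finset.range_one, Finset.sum_singleton, CharP.cast_eq_zero, zero_pow two_ne_zero,
    mul_zero, sub_zero]
  have h := ((hasSum_poissonWeight_mul_self t).add (hasSum_poissonWeight t)).mul_left t
  rw [show t * (t + 1) = t ^ 2 + t by ring] at h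
  refine h.congr_fun fun k ↦ ?_
  rw [show t * (poissonWeight t k * k + poissonWeight t k) = t * poissonWeight t k * (k + 1) by
    ring, ← poissonWeight_succ_mul]
  push_cast
  ring

lemma hasSum_poissonWeight_mul_sq_sub (t : ℝ) :
    HasSum (fun k ↦ poissonWeight t k * (k - t) ^ 2) t := by
  have h := ((hasSum_poissonWeight_mul_sq t).sub
    ((hasSum_poissonWeight_mul_self t).mul_left (2 * t))).add
    ((hasSum_poissonWeight t).mul_left (t ^ 2))
  rw [show t ^ 2 + t - 2 * t * t + t ^ 2 * 1 = t by ring] at h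
  exact h.congr_fun fun k ↦ by ring

section Moments

variable {ι : Type*} {w z : ι → ℝ} {N t σ α β : ℝ}

lemma hasSum_mul_sq_stancu_sub (h0 : HasSum w 1) (h1 : HasSum (fun i ↦ w i * z i) (N * t))
    (h2 : HasSum (fun i ↦ w i * (z i - N * t) ^ 2) σ) (hNβ : N + β ≠ 0) :
    HasSum (fun i ↦ w i * ((z i + α) / (N + β) - t) ^ 2)
      ((σ + (α - β * t) ^ 2) / (N + β) ^ 2) := by
  have h := ((h2.add ((h1.sub (h0.mul_left (N * t))).mul_left (2 * (α - β * t)))).add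
    (h0.mul_left ((α - β * t) ^ 2))).div_const ((N + β) ^ 2)
  rw [show σ + 2 * (α - β * t) * (N * t - N * t * 1) + (α - β * t) ^ 2 * 1
    = σ + (α - β * t) ^ 2 by ring] at h
  refine h.congr_fun fun i ↦ ?_
  field_simp
  ring

lemma stancu_moment_le (hN : 1 ≤ N) (hα : 0 ≤ α) (hβ : 0 ≤ β) (ht : 0 ≤ t) (hσ : 0 ≤ σ)
    (hσN : σ ≤ N * (1 + t ^ 2)) :
    (σ + (α - β * t) ^ 2) / (N + β) ^ 2 ≤ (1 + (α + β) ^ 2) * (1 + t ^ 2) / N := by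
  have hshift : (α - β * t) ^ 2 ≤ (α + β) ^ 2 * (1 + t ^ 2) := by
    nlinarith [sq_nonneg (α * t - β), mul_nonneg hα hβ, mul_nonneg (mul_nonneg hα hβ) ht]
  calc (σ + (α - β * t) ^ 2) / (N + β) ^ 2
      ≤ (σ + (α - β * t) ^ 2) / N ^ 2 := by gcongr; linarith
    _ ≤ N * ((1 + (α + β) ^ 2) * (1 + t ^ 2)) / N ^ 2 := by gcongr; nlinarith
    _ = (1 + (α + β) ^ 2) * (1 + t ^ 2) / N := by field_simp

end Moments

lemma abs_tsum_mul_sub_le {ι : Type*} {w g d : ι → ℝ} {c a A V : ℝ} (hw0 : ∀ i, 0 ≤ w i)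
    (hw : HasSum w 1) (hV : HasSum (fun i ↦ w i * d i) V)
    (hg : ∀ i, w i ≠ 0 → |g i - c| ≤ a + A * d i) :
    |∑' i, w i * g i - c| ≤ a + A * V := by
  have hB : HasSum (fun i ↦ w i * (a + A * d i)) (a + A * V) := by
    have h := (hw.mul_left a).add (hV.mul_left A)
    rw [mul_one] at h
    exact h.congr_fun fun i ↦ by ring
  have he : ∀ i, ‖w i * (g i - c)‖ ≤ w i * (a + A * d i) := by
    intro i
    rcases eq_or_ne (w i) 0 with h | h
    · simp [h]
    · rw [Real.norm_eq_abs, abs_mul, abs_of_nonneg (hw0 i)]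
      exact mul_le_mul_of_nonneg_left (hg i h) (hw0 i)
  have hsum : HasSum (fun i ↦ w i * g i) (∑' i, w i * (g i - c) + c) := by
    have h := (Summable.of_norm_bounded hB.summable he).hasSum.add (hw.mul_right c)
    rw [one_mul] at h
    exact h.congr_fun fun i ↦ by ring
  rw [hsum.tsum_eq, add_sub_cancel_right, ← Real.norm_eq_abs]
  exact tsum_of_norm_bounded hB he

lemma stancu_node_mem_Icc {α β : ℝ} (hα : 0 ≤ α) (hαβ : α ≤ β) {m ν : ℕ} (hν : ν ≤ m) :
    (ν + α) / (m + β) ∈ Icc (0 : ℝ) 1 :=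
  have : 0 ≤ β := hα.trans hαβ
  ⟨by positivity, div_le_one_of_le₀ (by gcongr) (by positivity)⟩

lemma stancu_node_nonneg {α β : ℝ} (hα : 0 ≤ α) (hαβ : α ≤ β) (n k : ℕ) :
    0 ≤ (k + α) / (n + β) := by
  have : 0 ≤ β := hα.trans hαβ
  positivity

lemma L_eq_tsum_poissonWeight_mul (α₁ β₁ α₂ β₂ : ℝ) (m n : ℕ) (f : ℝ → ℝ → ℝ) (x y : ℝ) :
    L α₁ β₁ α₂ β₂ m n f x y = ∑' k, poissonWeight (n * y) k *
      ∑' ν, bernsteinWeight m ν x * f ((ν + α₁) / (m + β₁)) ((k + α₂) / (n + β₂)) := by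
  refine tsum_congr fun k ↦ ?_
  rw [(hasSum_bernsteinWeight_mul m x _).tsum_eq, Finset.mul_sum]
  exact Finset.sum_congr rfl fun ν _ ↦ by unfold bernsteinWeight poissonWeight; ring

section Operator

variable {α₁ β₁ α₂ β₂ : ℝ} {m n : ℕ} {f : ℝ → ℝ → ℝ} {x y : ℝ}

lemma exists_hasSum_bernsteinWeight_stancu_moment_le {α β : ℝ} (hα : 0 ≤ α) (hαβ : α ≤ β)
    (hm : 1 ≤ m) (hx : x ∈ Icc (0 : ℝ) 1) :
    ∃ V, HasSum (fun ν ↦ bernsteinWeight m ν x * ((ν + α) / (m + β) - x) ^ 2) V ∧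
      V ≤ (1 + (α + β) ^ 2) * (1 + x ^ 2) / m := by
  have hm' : (1 : ℝ) ≤ m := by exact_mod_cast hm
  have hβ : 0 ≤ β := hα.trans hαβ
  refine ⟨_, hasSum_mul_sq_stancu_sub (hasSum_bernsteinWeight m x)
    (hasSum_bernsteinWeight_mul_self m x) (hasSum_bernsteinWeight_mul_sq_sub m x) (by linarith),
    stancu_moment_le hm' hα hβ hx.1 ?_ ?_⟩
  · exact mul_nonneg (mul_nonneg (Nat.cast_nonneg m) hx.1) (by linarith [hx.2])
  · rw [mul_assoc]
    gcongr
    nlinarith [hx.1, hx.2]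

lemma exists_hasSum_poissonWeight_stancu_moment_le {α β : ℝ} (hα : 0 ≤ α) (hαβ : α ≤ β)
    (hn : 1 ≤ n) (hy : 0 ≤ y) :
    ∃ V, HasSum (fun k ↦ poissonWeight (n * y) k * ((k + α) / (n + β) - y) ^ 2) V ∧
      V ≤ (1 + (α + β) ^ 2) * (1 + y ^ 2) / n := by
  have hn' : (1 : ℝ) ≤ n := by exact_mod_cast hn
  have hβ : 0 ≤ β := hα.trans hαβ
  refine ⟨_, hasSum_mul_sq_stancu_sub (N := n) (t := y) (hasSum_poissonWeight _)
    (hasSum_poissonWeight_mul_self _) (hasSum_poissonWeight_mul_sq_sub _) (by linarith),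
    stancu_moment_le hn' hα hβ hy (by positivity) ?_⟩
  gcongr
  nlinarith [sq_nonneg (y - 1)]

theorem abs_L_sub_le (hα₁ : 0 ≤ α₁) (hβ₁ : α₁ ≤ β₁) (hα₂ : 0 ≤ α₂) (hβ₂ : α₂ ≤ β₂)
    (hm : 1 ≤ m) (hn : 1 ≤ n) (hx : x ∈ Icc (0 : ℝ) 1) (hy : 0 ≤ y) {a A : ℝ} (hA : 0 ≤ A)
    (hf : ∀ u ∈ Icc (0 : ℝ) 1, ∀ v ∈ Ici (0 : ℝ),
      |f u v - f x y| ≤ a + A * ((u - x) ^ 2 + (v - y) ^ 2)) :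
    |L α₁ β₁ α₂ β₂ m n f x y - f x y|
      ≤ a + A * ((1 + (α₁ + β₁) ^ 2) / m + (1 + (α₂ + β₂) ^ 2) / n) * (1 + x ^ 2 + y ^ 2) := by
  obtain ⟨VB, hB, hVB⟩ := exists_hasSum_bernsteinWeight_stancu_moment_le hα₁ hβ₁ hm hx
  obtain ⟨VP, hP, hVP⟩ := exists_hasSum_poissonWeight_stancu_moment_le hα₂ hβ₂ hn hy
  have inner (k : ℕ) : |∑' ν, bernsteinWeight m ν x *
      f ((ν + α₁) / (m + β₁)) ((k + α₂) / (n + β₂)) - f x y|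
      ≤ a + A * ((k + α₂) / (n + β₂) - y) ^ 2 + A * VB := by
    refine abs_tsum_mul_sub_le (bernsteinWeight_nonneg hx) (hasSum_bernsteinWeight m x) hB
      fun ν hν ↦ ?_
    have hνm : ν ≤ m := not_lt.1 fun h ↦ hν (bernsteinWeight_eq_zero_of_lt h)
    have := hf _ (stancu_node_mem_Icc hα₁ hβ₁ hνm) _ (stancu_node_nonneg hα₂ hβ₂ n k)
    linarith
  have outer := abs_tsum_mul_sub_le (poissonWeight_nonneg (by positivity))
    (hasSum_poissonWeight _) hP fun k _ ↦ (inner k).trans_eq (add_right_comm _ _ _)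
  have hmoments : VB + VP
      ≤ ((1 + (α₁ + β₁) ^ 2) / m + (1 + (α₂ + β₂) ^ 2) / n) * (1 + x ^ 2 + y ^ 2) :=
    calc VB + VP ≤ (1 + (α₁ + β₁) ^ 2) * (1 + x ^ 2) / m
          + (1 + (α₂ + β₂) ^ 2) * (1 + y ^ 2) / n := add_le_add hVB hVP
      _ ≤ (1 + (α₁ + β₁) ^ 2) * (1 + x ^ 2 + y ^ 2) / m
          + (1 + (α₂ + β₂) ^ 2) * (1 + x ^ 2 + y ^ 2) / n := by
          gcongr (1 + (α₁ + β₁) ^ 2) * ?_ / _ + (1 + (α₂ + β₂) ^ 2) * ?_ / _ <;>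
            nlinarith [sq_nonneg x, sq_nonneg y]
      _ = _ := by ring
  rw [L_eq_tsum_poissonWeight_mul]
  nlinarith [mul_le_mul_of_nonneg_left hmoments hA]

end Operator

section Growth

variable {f : ℝ → ℝ → ℝ} {M : ℝ}

lemma abs_sub_le_of_growth (hM : 0 ≤ M)
    (hfg : ∀ x ∈ Icc (0 : ℝ) 1, ∀ y ∈ Ici (0 : ℝ), |f x y| ≤ M * (1 + x ^ 2 + y ^ 2))
    {x y u v : ℝ} (hx : x ∈ Icc (0 : ℝ) 1) (hy : y ∈ Ici (0 : ℝ)) (hu : u ∈ Icc (0 : ℝ) 1)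
    (hv : v ∈ Ici (0 : ℝ)) :
    |f u v - f x y| ≤ 3 * M * (1 + x ^ 2 + y ^ 2) + 2 * M * ((u - x) ^ 2 + (v - y) ^ 2) := by
  have hu2 : u ^ 2 ≤ 1 := by nlinarith [hu.1, hu.2]
  have hv2 : v ^ 2 ≤ 2 * y ^ 2 + 2 * (v - y) ^ 2 := by nlinarith [sq_nonneg (2 * y - v)]
  calc |f u v - f x y| ≤ |f u v| + |f x y| := abs_sub _ _
    _ ≤ M * (1 + u ^ 2 + v ^ 2) + M * (1 + x ^ 2 + y ^ 2) :=
        add_le_add (hfg u hu v hv) (hfg x hx y hy)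
    _ ≤ _ := by
      nlinarith [mul_le_mul_of_nonneg_left hu2 hM, mul_le_mul_of_nonneg_left hv2 hM,
        mul_nonneg hM (sq_nonneg x), mul_nonneg hM (sq_nonneg (u - x))]

lemma exists_abs_sub_le_quadratic (hM : 0 ≤ M)
    (hfc : ContinuousOn (fun p : ℝ × ℝ ↦ f p.1 p.2) (Icc 0 1 ×ˢ Ici 0))
    (hfg : ∀ x ∈ Icc (0 : ℝ) 1, ∀ y ∈ Ici (0 : ℝ), |f x y| ≤ M * (1 + x ^ 2 + y ^ 2))
    {ε : ℝ} (hε : 0 < ε) (S : ℝ) :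
    ∃ A, 0 ≤ A ∧ ∀ x ∈ Icc (0 : ℝ) 1, ∀ y ∈ Icc (0 : ℝ) S, ∀ u ∈ Icc (0 : ℝ) 1,
      ∀ v ∈ Ici (0 : ℝ), |f u v - f x y| ≤ ε + A * ((u - x) ^ 2 + (v - y) ^ 2) := by
  have hK : IsCompact (Icc (0 : ℝ) 1 ×ˢ Icc (0 : ℝ) (S + 1)) := isCompact_Icc.prod isCompact_Icc
  obtain ⟨δ, hδ, hfδ⟩ := Metric.uniformContinuousOn_iff.1 (hK.uniformContinuousOn_of_continuous
    (hfc.mono (prod_mono subset_rfl Icc_subset_Ici_self))) ε hε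
  set r := min δ 1
  have hr : 0 < r := lt_min hδ one_pos
  refine ⟨3 * M * (2 + S ^ 2) / r ^ 2 + 2 * M, by positivity, fun x hx y hy u hu v hv ↦ ?_⟩
  by_cases hclose : |u - x| < r ∧ |v - y| < r
  · have hdist : dist (u, v) (x, y) < δ :=
      max_lt (hclose.1.trans_le (min_le_left _ _)) (hclose.2.trans_le (min_le_left _ _))
    have huv : (u, v) ∈ Icc (0 : ℝ) 1 ×ˢ Icc (0 : ℝ) (S + 1) :=
      ⟨hu, hv, by linarith [(abs_lt.1 hclose.2).2, hy.2, min_le_right δ 1]⟩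
    have hnear := hfδ (u, v) huv (x, y) ⟨hx, hy.1, by linarith [hy.2]⟩ hdist
    rw [Real.dist_eq] at hnear
    have : 0 ≤ (3 * M * (2 + S ^ 2) / r ^ 2 + 2 * M) * ((u - x) ^ 2 + (v - y) ^ 2) := by
      positivity
    linarith
  · have hfar : r ^ 2 ≤ (u - x) ^ 2 + (v - y) ^ 2 := by
      rw [not_and_or, not_lt, not_lt] at hclose
      rcases hclose with h | h
      · nlinarith [sq_abs (u - x), pow_le_pow_left₀ hr.le h 2, sq_nonneg (v - y)]
      · nlinarith [sq_abs (v - y), pow_le_pow_left₀ hr.le h 2, sq_nonneg (u - x)]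
    have hweight : 1 + x ^ 2 + y ^ 2 ≤ 2 + S ^ 2 := by nlinarith [hx.1, hx.2, hy.1, hy.2]
    have hscale :
        3 * M * (2 + S ^ 2) ≤ 3 * M * (2 + S ^ 2) / r ^ 2 * ((u - x) ^ 2 + (v - y) ^ 2) := by
      rw [div_mul_eq_mul_div, le_div_iff₀ (by positivity)]
      gcongr
    have := abs_sub_le_of_growth hM hfg hx hy.1 hu hv
    nlinarith [mul_le_mul_of_nonneg_left hweight hM]

end Growth

section Convergence

variable {α₁ β₁ α₂ β₂ : ℝ} {f : ℝ → ℝ → ℝ} {M : ℝ}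

theorem exists_abs_L_sub_le_mul_weight (hα₁ : 0 ≤ α₁) (hβ₁ : α₁ ≤ β₁) (hα₂ : 0 ≤ α₂)
    (hβ₂ : α₂ ≤ β₂) (hM : 0 ≤ M)
    (hfg : ∀ x ∈ Icc (0 : ℝ) 1, ∀ y ∈ Ici (0 : ℝ), |f x y| ≤ M * (1 + x ^ 2 + y ^ 2)) :
    ∃ K, 0 ≤ K ∧ ∀ m n : ℕ, 1 ≤ m → 1 ≤ n → ∀ x ∈ Icc (0 : ℝ) 1, ∀ y ∈ Ici (0 : ℝ),
      |L α₁ β₁ α₂ β₂ m n f x y - f x y| ≤ K * (1 + x ^ 2 + y ^ 2) := by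
  refine ⟨3 * M + 2 * M * ((1 + (α₁ + β₁) ^ 2) + (1 + (α₂ + β₂) ^ 2)), by positivity,
    fun m n hm hn x hx y hy ↦ ?_⟩
  have h := abs_L_sub_le hα₁ hβ₁ hα₂ hβ₂ hm hn hx hy (by positivity : 0 ≤ 2 * M)
    fun u hu v hv ↦ abs_sub_le_of_growth hM hfg hx hy hu hv
  have hm' : (1 + (α₁ + β₁) ^ 2) / m ≤ 1 + (α₁ + β₁) ^ 2 :=
    div_le_self (by positivity) (by exact_mod_cast hm)
  have hn' : (1 + (α₂ + β₂) ^ 2) / n ≤ 1 + (α₂ + β₂) ^ 2 :=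
    div_le_self (by positivity) (by exact_mod_cast hn)
  have hρ : 0 ≤ 1 + x ^ 2 + y ^ 2 := by positivity
  nlinarith [mul_le_mul_of_nonneg_right (add_le_add hm' hn')
    (mul_nonneg (mul_nonneg zero_le_two hM) hρ)]

theorem exists_abs_L_sub_lt_on_Icc (hα₁ : 0 ≤ α₁) (hβ₁ : α₁ ≤ β₁) (hα₂ : 0 ≤ α₂)
    (hβ₂ : α₂ ≤ β₂) (hM : 0 ≤ M)
    (hfc : ContinuousOn (fun p : ℝ × ℝ ↦ f p.1 p.2) (Icc 0 1 ×ˢ Ici 0))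
    (hfg : ∀ x ∈ Icc (0 : ℝ) 1, ∀ y ∈ Ici (0 : ℝ), |f x y| ≤ M * (1 + x ^ 2 + y ^ 2))
    {ε : ℝ} (hε : 0 < ε) (S : ℝ) :
    ∃ N : ℕ, ∀ m n : ℕ, N ≤ m → N ≤ n → ∀ x ∈ Icc (0 : ℝ) 1, ∀ y ∈ Icc (0 : ℝ) S,
      |L α₁ β₁ α₂ β₂ m n f x y - f x y| < ε := by
  obtain ⟨A, hA, hfA⟩ := exists_abs_sub_le_quadratic hM hfc hfg (half_pos hε) S
  set C := (1 + (α₁ + β₁) ^ 2) + (1 + (α₂ + β₂) ^ 2)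
  obtain ⟨N, hN⟩ := exists_nat_gt (2 * A * C * (2 + S ^ 2) / ε)
  have hN0 : (0 : ℝ) < N := lt_of_le_of_lt (by positivity) hN
  refine ⟨N, fun m n hm hn x hx y hy ↦ ?_⟩
  have hN1 : 1 ≤ N := Nat.cast_pos.1 hN0
  have hmoments : (1 + (α₁ + β₁) ^ 2) / m + (1 + (α₂ + β₂) ^ 2) / n ≤ C / N :=
    calc _ ≤ (1 + (α₁ + β₁) ^ 2) / N + (1 + (α₂ + β₂) ^ 2) / N := by gcongr
      _ = C / N := (add_div _ _ _).symm
  have hweight : 1 + x ^ 2 + y ^ 2 ≤ 2 + S ^ 2 := by nlinarith [hx.1, hx.2, hy.1, hy.2]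
  have hsmall : A * (C / N) * (2 + S ^ 2) < ε / 2 := by
    have := (div_lt_iff₀ hε).1 hN
    rw [show A * (C / N) * (2 + S ^ 2) = A * C * (2 + S ^ 2) / N by ring, div_lt_iff₀ hN0]
    linarith
  calc |L α₁ β₁ α₂ β₂ m n f x y - f x y|
      ≤ ε / 2 + A * ((1 + (α₁ + β₁) ^ 2) / m + (1 + (α₂ + β₂) ^ 2) / n) * (1 + x ^ 2 + y ^ 2) :=
        abs_L_sub_le hα₁ hβ₁ hα₂ hβ₂ (hN1.trans hm) (hN1.trans hn) hx hy.1 hA (hfA x hx y hy)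
    _ ≤ ε / 2 + A * (C / N) * (2 + S ^ 2) := by gcongr
    _ < ε := by linarith

end Convergence

theorem L_weighted_convergence (α₁ β₁ α₂ β₂ : ℝ) (hα₁ : 0 ≤ α₁) (hβ₁ : α₁ ≤ β₁)
    (hα₂ : 0 ≤ α₂) (hβ₂ : α₂ ≤ β₂) (ρ₁ : ℝ → ℝ → ℝ)
    (hρ₁ : ∀ x ∈ Set.Icc (0:ℝ) 1, ∀ y ∈ Set.Ici (0:ℝ), 1 ≤ ρ₁ x y)
    (hdecay : ∀ ε > (0:ℝ), ∃ s : ℝ, ∀ x ∈ Set.Icc (0:ℝ) 1, ∀ y ∈ Set.Ici (0:ℝ),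
        s ≤ x ^ 2 + y ^ 2 → (1 + x ^ 2 + y ^ 2) / ρ₁ x y < ε)
    (f : ℝ → ℝ → ℝ) (Mf : ℝ)
    (hfc : ContinuousOn (fun p : ℝ × ℝ => f p.1 p.2) (Set.Icc 0 1 ×ˢ Set.Ici 0))
    (hfg : ∀ x ∈ Set.Icc (0:ℝ) 1, ∀ y ∈ Set.Ici (0:ℝ), |f x y| ≤ Mf * (1 + x ^ 2 + y ^ 2)) :
    ∀ ε > (0:ℝ), ∃ N : ℕ, ∀ m n : ℕ, N ≤ m → N ≤ n →
      ∀ x ∈ Set.Icc (0:ℝ) 1, ∀ y ∈ Set.Ici (0:ℝ),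
        |L α₁ β₁ α₂ β₂ m n f x y - f x y| / ρ₁ x y < ε := by
  intro ε hε
  have hM : 0 ≤ Mf := (abs_nonneg _).trans (by simpa using hfg 0 (by simp) 0 (by simp))
  obtain ⟨K, hK, hbounded⟩ := exists_abs_L_sub_le_mul_weight hα₁ hβ₁ hα₂ hβ₂ hM hfg
  obtain ⟨s, hs⟩ := hdecay (ε / (K + 1)) (by positivity)
  obtain ⟨N, hcompact⟩ := exists_abs_L_sub_lt_on_Icc hα₁ hβ₁ hα₂ hβ₂ hM hfc hfg hε (max s 1)
  refine ⟨max N 1, fun m n hm hn x hx y hy ↦ ?_⟩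
  have hρ := hρ₁ x hx y hy
  rcases le_or_gt s (x ^ 2 + y ^ 2) with hfar | hnear
  · calc |L α₁ β₁ α₂ β₂ m n f x y - f x y| / ρ₁ x y
        ≤ K * ((1 + x ^ 2 + y ^ 2) / ρ₁ x y) := by
          rw [← mul_div_assoc]
          gcongr
          exact hbounded m n (le_of_max_le_right hm) (le_of_max_le_right hn) x hx y hy
      _ ≤ K * (ε / (K + 1)) := mul_le_mul_of_nonneg_left (hs x hx y hy hfar).le hK
      _ < ε := by
          rw [mul_div_assoc', div_lt_iff₀ (by positivity)]
          linarith
  · have hy' : y ≤ max s 1 := by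
      rcases le_or_gt y 1 with h | h
      · exact le_max_of_le_right h
      · exact le_max_of_le_left (by nlinarith)
    calc |L α₁ β₁ α₂ β₂ m n f x y - f x y| / ρ₁ x y
        ≤ |L α₁ β₁ α₂ β₂ m n f x y - f x y| := div_le_self (abs_nonneg _) hρ
      _ < ε := hcompact m n (le_of_max_le_left hm) (le_of_max_le_left hn) x hx y ⟨hy, hy'⟩
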